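/- arXiv:math/0507341 — 2 statements merged into one kernel-verified Lean document; each statement's English description precedes it below -/
import Mathlib

section
/- In the Heisenberg algebra H[a], define B_{-λ} = B_{-λ_1}···B_{-λ_l} for a partition λ, U_k = Σ_{λ⊢k} z_λ^{-1} B_{-λ}, and D_k = Σ_{λ⊢k} z_λ^{-1} B_λ. Then for all positive integers a and b: D_b U_a = Σ_{j=0}^{min(a,b)} h_j⟨a⟩ · U_{a-j} D_{b-j}, where h_j⟨a⟩ ∈ K is the image of h_j under the algebra map κ: Λ_K → K sending p_k ↦ a_k, and U_0 = D_0 = 1. -/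
/-- `z λ = ∏_i i^{m_i(λ)} m_i(λ)!`. -/
def zPart {n : ℕ} (lam : Nat.Partition n) : ℕ :=
  ∏ i ∈ lam.parts.toFinset, i ^ (lam.parts.count i) * (lam.parts.count i).factorial

/-- Ordered product `B_{λ_1} ⋯ B_{λ_l}`. -/
noncomputable def Bprod {A : Type*} [Ring A] (B : ℤ → A) (s : Multiset ℕ) : A :=
  (s.toList.map (fun i => B (i : ℤ))).prod

/-- Ordered product `B_{-λ_1} ⋯ B_{-λ_l}`. -/
noncomputable def BprodNeg {A : Type*} [Ring A] (B : ℤ → A) (s : Multiset ℕ) : A :=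
  (s.toList.map (fun i => B (-(i : ℤ)))).prod

/-- `U_k = ∑_{λ ⊢ k} z_λ⁻¹ B_{-λ}`. -/
noncomputable def Uop (K : Type*) [Field K] {A : Type*} [Ring A] [Algebra K A]
    (B : ℤ → A) (k : ℕ) : A :=
  ∑ lam : Nat.Partition k, ((zPart lam : K)⁻¹) • BprodNeg B lam.parts

/-- `D_k = ∑_{λ ⊢ k} z_λ⁻¹ B_λ`. -/
noncomputable def Dop (K : Type*) [Field K] {A : Type*} [Ring A] [Algebra K A]
    (B : ℤ → A) (k : ℕ) : A :=
  ∑ lam : Nat.Partition k, ((zPart lam : K)⁻¹) • Bprod B lam.parts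

/-- `h_j⟨a⟩ = ∑_{λ ⊢ j} z_λ⁻¹ ∏_i a_{λ_i}`. -/
noncomputable def hval {K : Type*} [Field K] (a : ℤ → K) (j : ℕ) : K :=
  ∑ lam : Nat.Partition j, (zPart lam : K)⁻¹ * (lam.parts.map (fun i => a (i : ℤ))).prod

/-! ### Auxiliary combinatorics of `z_λ` -/

/-- `zPart` as a function of the raw multiset of parts. -/
def zMul (s : Multiset ℕ) : ℕ :=
  ∏ i ∈ s.toFinset, i ^ s.count i * (s.count i).factorial

lemma zPart_eq {n : ℕ} (lam : Nat.Partition n) : zPart lam = zMul lam.parts := rfl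

lemma zMul_pos {s : Multiset ℕ} (hs : ∀ i ∈ s, 0 < i) : 0 < zMul s := by
  refine Finset.prod_pos fun i hi => ?_
  have : 0 < i := hs i (Multiset.mem_toFinset.mp hi)
  exact Nat.mul_pos (Nat.pow_pos this) (Nat.factorial_pos _)

lemma zMul_erase {s : Multiset ℕ} {k : ℕ} (hk : k ∈ s) :
    zMul s = k * s.count k * zMul (s.erase k) := by
  classical
  have hsub : (s.erase k).toFinset ⊆ s.toFinset :=
    Multiset.toFinset_subset.mpr (Multiset.subset_of_le (Multiset.erase_le k s))
  have hze : zMul (s.erase k) =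
      ∏ i ∈ s.toFinset, i ^ (s.erase k).count i * ((s.erase k).count i).factorial := by
    refine Finset.prod_subset hsub fun i _ hi => ?_
    have : (s.erase k).count i = 0 :=
      Multiset.count_eq_zero.mpr (fun h => hi (Multiset.mem_toFinset.mpr h))
    simp [this]
  have hkmem : k ∈ s.toFinset := Multiset.mem_toFinset.mpr hk
  rw [hze, zMul, ← Finset.mul_prod_erase s.toFinset _ hkmem,
    ← Finset.mul_prod_erase s.toFinset _ hkmem]
  have hrest : ∏ i ∈ s.toFinset.erase k, i ^ (s.erase k).count i * ((s.erase k).count i).factorial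
      = ∏ i ∈ s.toFinset.erase k, i ^ s.count i * (s.count i).factorial := by
    refine Finset.prod_congr rfl fun i hi => ?_
    have hne : i ≠ k := (Finset.mem_erase.mp hi).1
    rw [Multiset.count_erase_of_ne hne]
  rw [hrest]
  obtain ⟨m, hm⟩ : ∃ m, s.count k = m + 1 :=
    ⟨s.count k - 1, (Nat.succ_pred_eq_of_pos (Multiset.count_pos.mpr hk)).symm⟩
  rw [Multiset.count_erase_self, hm]
  simp [pow_succ, Nat.factorial_succ]
  ring

/-! ### Ordered products of commuting families -/

/-- Ordered product of `P i` over a multiset. -/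
noncomputable def Pprod {A : Type*} [Ring A] (P : ℕ → A) (s : Multiset ℕ) : A :=
  (s.toList.map P).prod

@[simp] lemma Pprod_zero {A : Type*} [Ring A] (P : ℕ → A) : Pprod P (0 : Multiset ℕ) = 1 := by
  simp [Pprod]

lemma Pprod_cons {A : Type*} [Ring A] (P : ℕ → A) (k : ℕ) (s : Multiset ℕ)
    (hP : ∀ i ∈ k ::ₘ s, ∀ j ∈ k ::ₘ s, Commute (P i) (P j)) :
    Pprod P (k ::ₘ s) = P k * Pprod P s := by
  have hperm : ((k ::ₘ s).toList).Perm (k :: s.toList) := by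
    rw [← Multiset.coe_eq_coe, Multiset.coe_toList, ← Multiset.cons_coe, Multiset.coe_toList]
  have hpair : (((k ::ₘ s).toList).map P).Pairwise Commute := by
    refine List.pairwise_of_forall_mem_list ?_
    rintro x hx y hy
    simp only [List.mem_map] at hx hy
    obtain ⟨i, hi, rfl⟩ := hx
    obtain ⟨j, hj, rfl⟩ := hy
    exact hP i (by rwa [← Multiset.mem_toList]) j (by rwa [← Multiset.mem_toList])
  calc (((k ::ₘ s).toList).map P).prod = ((k :: s.toList).map P).prod :=
        List.Perm.prod_eq' (hperm.map P) hpair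
    _ = P k * Pprod P s := by simp [Pprod]

/-- Commuting a single element through an ordered product, picking up one
delta term per occurrence of `k`. -/
lemma mul_Pprod {K : Type*} [Field K] {A : Type*} [Ring A] [Algebra K A]
    (P : ℕ → A) (x : A) (k : ℕ) (c : K)
    (hP : ∀ i j : ℕ, 0 < i → 0 < j → Commute (P i) (P j))
    (hx : ∀ i : ℕ, 0 < i → x * P i - P i * x = if i = k then c • (1 : A) else 0)
    (s : Multiset ℕ) (hs : ∀ i ∈ s, 0 < i) :
    x * Pprod P s = Pprod P s * x + ((s.count k : K) * c) • Pprod P (s.erase k) := by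
  classical
  induction s using Multiset.induction with
  | empty => simp
  | cons i t ih =>
    have hit : ∀ j ∈ t, 0 < j := fun j hj => hs j (Multiset.mem_cons_of_mem hj)
    have hipos : 0 < i := hs i (Multiset.mem_cons_self i t)
    have hcomm : ∀ u : Multiset ℕ, (∀ j ∈ u, 0 < j) →
        Pprod P (i ::ₘ u) = P i * Pprod P u := by
      intro u hu
      refine Pprod_cons P i u fun a hha b hhb => ?_
      have hap : 0 < a := by
        rcases Multiset.mem_cons.mp hha with h | h
        · exact h ▸ hipos
        · exact hu a h
      have hbp : 0 < b := by
        rcases Multiset.mem_cons.mp hhb with h | h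
        · exact h ▸ hipos
        · exact hu b h
      exact hP a b hap hbp
    rw [hcomm t hit]
    have hxi : x * P i = P i * x + (if i = k then c • (1 : A) else 0) := by
      have := hx i hipos
      linear_combination (norm := noncomm_ring) this
    calc x * (P i * Pprod P t) = (x * P i) * Pprod P t := by noncomm_ring
      _ = P i * (x * Pprod P t) + (if i = k then c • (1 : A) else 0) * Pprod P t := by
          rw [hxi]; noncomm_ring
      _ = P i * (Pprod P t * x + ((t.count k : K) * c) • Pprod P (t.erase k))
            + (if i = k then c • Pprod P t else 0) := by
          rw [ih hit]; split <;> simp [smul_mul_assoc]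
      _ = (P i * Pprod P t) * x + ((t.count k : K) * c) • (P i * Pprod P (t.erase k))
            + (if i = k then c • Pprod P t else 0) := by
          rw [mul_add, mul_smul_comm]; noncomm_ring
      _ = _ := by
          by_cases hik : i = k
          · subst hik
            rw [Multiset.erase_cons_head, Multiset.count_cons_self]
            have hterm : ((t.count i : K) * c) • (P i * Pprod P (t.erase i))
                = ((t.count i : K) * c) • Pprod P t := by
              by_cases hmem : i ∈ t
              · rw [← hcomm (t.erase i) (fun j hj => hit j (Multiset.mem_of_mem_erase hj)),
                  Multiset.cons_erase hmem]
              · have : t.count i = 0 := Multiset.count_eq_zero.mpr hmem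
                simp [this]
            rw [hterm, ← hcomm t hit]
            simp only [if_pos rfl]
            push_cast
            rw [add_mul, one_mul, add_smul]
            ring_nf
            abel
          · rw [Multiset.erase_cons_tail _ (by exact fun h => hik h),
              Multiset.count_cons_of_ne (Ne.symm hik), if_neg hik,
              hcomm (t.erase k) (fun j hj => hit j (Multiset.mem_of_mem_erase hj)),
              ← hcomm t hit]
            abel

/-! ### The key partition bijection and Newton-type recurrence -/

/-- Key bijection: a sum over partitions of `n` with a distinguished part `k`
equals a sum over partitions of `n - k`. -/
lemma sum_partition_remove {K : Type*} [Field K] [CharZero K] (k n : ℕ)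
    (hk : 0 < k) (hkn : k ≤ n)
    {M : Type*} [AddCommMonoid M] [Module K M] (g : Multiset ℕ → M) :
    ∑ lam : Nat.Partition n,
      (((k * lam.parts.count k : ℕ) : K) / (zMul lam.parts : K)) • g (lam.parts.erase k)
    = ∑ mu : Nat.Partition (n - k), ((zMul mu.parts : K)⁻¹) • g mu.parts := by
  classical
  rw [← Finset.sum_filter_of_ne (s := Finset.univ)
      (p := fun lam : Nat.Partition n => k ∈ lam.parts) (fun lam _ hne => by
        by_contra hmem
        have : lam.parts.count k = 0 := Multiset.count_eq_zero.mpr hmem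
        simp [this] at hne)]
  refine Finset.sum_bij'
    (i := fun lam hlam => ⟨lam.parts.erase k,
        fun hj => lam.parts_pos (Multiset.mem_of_mem_erase hj), by
          have hmem : k ∈ lam.parts := (Finset.mem_filter.mp hlam).2
          have h := Multiset.sum_erase (s := lam.parts) hmem
          rw [lam.parts_sum] at h
          omega⟩)
    (j := fun mu _ => ⟨k ::ₘ mu.parts, by
          intro j hj
          rcases Multiset.mem_cons.mp hj with h | h
          · exact h ▸ hk
          · exact mu.parts_pos h, by
          rw [Multiset.sum_cons, mu.parts_sum]
          omega⟩)
    (fun lam hlam => Finset.mem_univ _)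
    (fun mu hmu => by
      simp only [Finset.mem_filter, Finset.mem_univ, true_and]
      exact Multiset.mem_cons_self _ _)
    (fun lam hlam => Nat.Partition.ext (Multiset.cons_erase (Finset.mem_filter.mp hlam).2))
    (fun mu hmu => Nat.Partition.ext (Multiset.erase_cons_head k mu.parts))
    ?_
  intro lam hlam
  have hmem : k ∈ lam.parts := (Finset.mem_filter.mp hlam).2
  have hcpos : 0 < lam.parts.count k := Multiset.count_pos.mpr hmem
  have hzpos : 0 < zMul (lam.parts.erase k) :=
    zMul_pos fun j hj => lam.parts_pos (Multiset.mem_of_mem_erase hj)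
  congr 1
  rw [zMul_erase hmem]
  have hk' : ((k : ℕ) : K) ≠ 0 := Nat.cast_ne_zero.mpr hk.ne'
  have hc' : ((lam.parts.count k : ℕ) : K) ≠ 0 := Nat.cast_ne_zero.mpr hcpos.ne'
  have h2 : ((zMul (lam.parts.erase k) : ℕ) : K) ≠ 0 := Nat.cast_ne_zero.mpr hzpos.ne'
  push_cast
  field_simp

/-- `X_m = ∑_{λ ⊢ m} z_λ⁻¹ • P_λ`. -/
noncomputable def Xop (K : Type*) [Field K] {A : Type*} [Ring A] [Algebra K A]
    (P : ℕ → A) (m : ℕ) : A :=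
  ∑ lam : Nat.Partition m, ((zMul lam.parts : K)⁻¹) • Pprod P lam.parts

lemma sum_count_mul {s : Multiset ℕ} {n : ℕ} (hpos : ∀ i ∈ s, 0 < i) (hsum : s.sum = n) :
    ∑ k ∈ Finset.Icc 1 n, k * s.count k = n := by
  classical
  have hsub : s.toFinset ⊆ Finset.Icc 1 n := by
    intro i hi
    have hm : i ∈ s := Multiset.mem_toFinset.mp hi
    exact Finset.mem_Icc.mpr ⟨hpos i hm, hsum ▸ Multiset.le_sum_of_mem hm⟩
  have h1 : s.sum = ∑ m ∈ s.toFinset, s.count m • m := by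
    conv_lhs => rw [show s.sum = (s.map id).sum by simp]
    exact Finset.sum_multiset_map_count s id
  have h2 : ∑ k ∈ Finset.Icc 1 n, k * s.count k = ∑ m ∈ s.toFinset, s.count m • m := by
    rw [← Finset.sum_subset hsub (fun x _ hx => by
      have : s.count x = 0 := Multiset.count_eq_zero.mpr (fun h => hx (Multiset.mem_toFinset.mpr h))
      simp [this])]
    exact Finset.sum_congr rfl fun i _ => by simp [Nat.mul_comm]
  rw [h2, ← h1, hsum]

/-- Newton-type recurrence `n • X_n = ∑_{k=1}^n P_k X_{n-k}`. -/
lemma newton_rec {K : Type*} [Field K] [CharZero K] {A : Type*} [Ring A] [Algebra K A]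
    (P : ℕ → A) (hP : ∀ i j : ℕ, 0 < i → 0 < j → Commute (P i) (P j)) (n : ℕ) :
    (n : K) • Xop K P n = ∑ k ∈ Finset.Icc 1 n, P k * Xop K P (n - k) := by
  classical
  have hstep : ∀ k ∈ Finset.Icc 1 n,
      P k * Xop K P (n - k) = ∑ lam : Nat.Partition n,
        (((k * lam.parts.count k : ℕ) : K) / (zMul lam.parts : K)) •
          (P k * Pprod P (lam.parts.erase k)) := by
    intro k hkIcc
    obtain ⟨hk1, hkn⟩ := Finset.mem_Icc.mp hkIcc
    rw [Xop, ← sum_partition_remove k n hk1 hkn (g := fun s => Pprod P s), Finset.mul_sum]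
    refine Finset.sum_congr rfl fun lam _ => ?_
    rw [mul_smul_comm]
  rw [Finset.sum_congr rfl hstep, Finset.sum_comm]
  rw [Xop, Finset.smul_sum]
  refine Finset.sum_congr rfl fun lam _ => ?_
  have hterm : ∀ k ∈ Finset.Icc 1 n,
      (((k * lam.parts.count k : ℕ) : K) / (zMul lam.parts : K)) •
          (P k * Pprod P (lam.parts.erase k))
      = (((k * lam.parts.count k : ℕ) : K) / (zMul lam.parts : K)) • Pprod P lam.parts := by
    intro k hkIcc
    by_cases hmem : k ∈ lam.parts
    · congr 1
      have hcons : Pprod P (k ::ₘ lam.parts.erase k) = P k * Pprod P (lam.parts.erase k) := by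
        refine Pprod_cons P k _ fun a hha b hhb => ?_
        have hsub : ∀ x ∈ k ::ₘ lam.parts.erase k, 0 < x := by
          intro x hx
          rcases Multiset.mem_cons.mp hx with h | h
          · exact h ▸ lam.parts_pos hmem
          · exact lam.parts_pos (Multiset.mem_of_mem_erase h)
        exact hP a b (hsub a hha) (hsub b hhb)
      rw [← hcons, Multiset.cons_erase hmem]
    · have : lam.parts.count k = 0 := Multiset.count_eq_zero.mpr hmem
      simp [this]
  rw [Finset.sum_congr rfl hterm, ← Finset.sum_smul, smul_smul, ← Finset.sum_div,
    show (∑ k ∈ Finset.Icc 1 n, ((k * lam.parts.count k : ℕ) : K))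
      = ((∑ k ∈ Finset.Icc 1 n, k * lam.parts.count k : ℕ) : K) by push_cast; ring,
    sum_count_mul (fun i hi => lam.parts_pos hi) lam.parts_sum, div_eq_mul_inv]

/-! ### Identification of `Uop`, `Dop`, `hval` with `Xop` -/

lemma list_map_coe {β : Type*} (g : ℤ → β) (l : List ℕ) :
    List.map g (do let a ← l; pure ((a : ℕ) : ℤ)) = List.map (fun i : ℕ => g (i : ℤ)) l := by
  induction l with
  | nil => rfl
  | cons a t ih => simpa using ih

lemma BprodNeg_eq {A : Type*} [Ring A] (B : ℤ → A) (s : Multiset ℕ) :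
    BprodNeg B s = Pprod (fun i : ℕ => B (-(i : ℤ))) s := by
  unfold BprodNeg Pprod
  congr 1
  exact list_map_coe (fun i : ℤ => B (-i)) s.toList

lemma Bprod_eq {A : Type*} [Ring A] (B : ℤ → A) (s : Multiset ℕ) :
    Bprod B s = Pprod (fun i : ℕ => B (i : ℤ)) s := by
  unfold Bprod Pprod
  congr 1
  exact list_map_coe (fun i : ℤ => B i) s.toList

lemma Uop_eq_Xop {K : Type*} [Field K] {A : Type*} [Ring A] [Algebra K A]
    (B : ℤ → A) (k : ℕ) : Uop K B k = Xop K (fun i : ℕ => B (-(i : ℤ))) k := by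
  rw [Uop, Xop]
  refine Finset.sum_congr rfl fun lam _ => ?_
  rw [show zPart lam = zMul lam.parts from rfl, BprodNeg_eq]

lemma Dop_eq_Xop {K : Type*} [Field K] {A : Type*} [Ring A] [Algebra K A]
    (B : ℤ → A) (k : ℕ) : Dop K B k = Xop K (fun i : ℕ => B (i : ℤ)) k := by
  rw [Dop, Xop]
  refine Finset.sum_congr rfl fun lam _ => ?_
  rw [show zPart lam = zMul lam.parts from rfl, Bprod_eq]

lemma hval_eq_Xop {K : Type*} [Field K] (a : ℤ → K) (j : ℕ) :
    hval a j = Xop K (fun i : ℕ => a (i : ℤ)) j := by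
  rw [hval, Xop]
  refine Finset.sum_congr rfl fun lam _ => ?_
  rw [smul_eq_mul, show zPart lam = zMul lam.parts from rfl]
  congr 1
  have h1 : (do let x ← lam.parts; pure ((x : ℕ) : ℤ)) = lam.parts.map (fun i : ℕ => (i : ℤ)) := by
    simp [Multiset.bind_singleton]
  show (Multiset.map (fun i : ℤ => a i) (do let x ← lam.parts; pure ((x : ℕ) : ℤ))).prod = _
  rw [h1, Multiset.map_map]
  conv_lhs => rw [← Multiset.coe_toList lam.parts, Multiset.map_coe, Multiset.prod_coe]
  rfl

lemma partition_zero_parts (lam : Nat.Partition 0) : lam.parts = 0 := by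
  rw [Multiset.eq_zero_iff_forall_notMem]
  intro x hx
  exact absurd (Multiset.sum_eq_zero_iff.mp lam.parts_sum x hx) (lam.parts_pos hx).ne'

lemma Xop_zero {K : Type*} [Field K] {A : Type*} [Ring A] [Algebra K A] (P : ℕ → A) :
    Xop K P 0 = 1 := by
  classical
  have hcard : (Finset.univ : Finset (Nat.Partition 0)).card = 1 := by
    rw [Finset.card_eq_one]
    refine ⟨⟨0, by simp, by simp⟩, Finset.eq_singleton_iff_unique_mem.mpr
      ⟨Finset.mem_univ _, fun x _ => Nat.Partition.ext ?_⟩⟩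
    rw [partition_zero_parts x]
  rw [Xop, Finset.sum_congr rfl (fun lam _ => by rw [partition_zero_parts lam]),
    Finset.sum_const, hcard]
  simp [zMul, Pprod]

/-- Commuting `x` through `Xop` picks up a single correction term. -/
lemma mul_Xop {K : Type*} [Field K] [CharZero K] {A : Type*} [Ring A] [Algebra K A]
    (P : ℕ → A) (x : A) (k : ℕ) (hk : 0 < k) (c : K)
    (hP : ∀ i j : ℕ, 0 < i → 0 < j → Commute (P i) (P j))
    (hx : ∀ i : ℕ, 0 < i → x * P i - P i * x = if i = k then ((k : K) * c) • (1 : A) else 0)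
    (pp : ℕ) :
    x * Xop K P pp = Xop K P pp * x + (if k ≤ pp then c • Xop K P (pp - k) else 0) := by
  classical
  rw [Xop, Finset.mul_sum]
  have hterm : ∀ lam : Nat.Partition pp,
      x * ((zMul lam.parts : K)⁻¹ • Pprod P lam.parts)
      = ((zMul lam.parts : K)⁻¹ • Pprod P lam.parts) * x
        + c • ((((k * lam.parts.count k : ℕ) : K) / (zMul lam.parts : K)) •
            Pprod P (lam.parts.erase k)) := by
    intro lam
    rw [mul_smul_comm, mul_Pprod P x k ((k : K) * c) hP hx lam.parts
        (fun i hi => lam.parts_pos hi), smul_add, smul_mul_assoc, smul_smul, smul_smul]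
    congr 2
    push_cast
    ring
  rw [Finset.sum_congr rfl (fun lam _ => hterm lam), Finset.sum_add_distrib, ← Finset.sum_mul,
    ← Finset.smul_sum]
  congr 1
  by_cases hkpp : k ≤ pp
  · rw [if_pos hkpp, sum_partition_remove k pp hk hkpp (g := fun s => Pprod P s)]
    rfl
  · rw [if_neg hkpp]
    have hz : ∀ lam : Nat.Partition pp, lam.parts.count k = 0 := by
      intro lam
      refine Multiset.count_eq_zero.mpr fun hmem => hkpp ?_
      exact lam.parts_sum ▸ Multiset.le_sum_of_mem hmem
    have hzero : ∀ lam : Nat.Partition pp,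
        ((((k * lam.parts.count k : ℕ) : K) / (zMul lam.parts : K)) •
            Pprod P (lam.parts.erase k)) = 0 := by
      intro lam; rw [hz lam]; simp
    rw [Finset.sum_congr rfl (fun lam _ => hzero lam)]
    simp

/-! ### Main theorem -/

set_option maxHeartbeats 1000000 in
/-- In the Heisenberg algebra `H[a]`,
`D_b U_a = ∑_{j=0}^{min(a,b)} h_j⟨a⟩ · U_{a-j} D_{b-j}`. -/
theorem Dop_mul_Uop
    {K A : Type*} [Field K] [CharZero K] [Ring A] [Algebra K A]
    (a : ℤ → K) (ha : ∀ l : ℤ, l ≠ 0 → a l ≠ 0) (haskew : ∀ l : ℤ, a (-l) = a l)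
    (B : ℤ → A)
    (hrel : ∀ k l : ℤ, k ≠ 0 → l ≠ 0 →
      B k * B l - B l * B k = if k = -l then ((k : K) * a k) • (1 : A) else 0)
    (p q : ℕ) (hp : 0 < p) (hq : 0 < q) :
    Dop K B q * Uop K B p =
      ∑ j ∈ Finset.range (min p q + 1),
        hval a j • (Uop K B (p - j) * Dop K B (q - j)) := by
  classical
  have hcomm_pos : ∀ i j : ℕ, 0 < i → 0 < j → Commute (B (i : ℤ)) (B (j : ℤ)) := by
    intro i j hi hj
    have h := hrel (i : ℤ) (j : ℤ) (by exact_mod_cast hi.ne') (by exact_mod_cast hj.ne')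
    rw [if_neg (by omega)] at h
    exact sub_eq_zero.mp h
  have hcomm_neg : ∀ i j : ℕ, 0 < i → 0 < j → Commute (B (-(i : ℤ))) (B (-(j : ℤ))) := by
    intro i j hi hj
    have h := hrel (-(i : ℤ)) (-(j : ℤ)) (by omega) (by omega)
    rw [if_neg (by omega)] at h
    exact sub_eq_zero.mp h
  -- commuting `B k` (k > 0) through `U`
  have hBU : ∀ k pp : ℕ, 0 < k →
      B (k : ℤ) * Uop K B pp = Uop K B pp * B (k : ℤ)
        + (if k ≤ pp then a (k : ℤ) • Uop K B (pp - k) else 0) := by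
    intro k pp hk
    have hx : ∀ i : ℕ, 0 < i →
        B (k : ℤ) * B (-(i : ℤ)) - B (-(i : ℤ)) * B (k : ℤ)
          = if i = k then ((k : K) * a (k : ℤ)) • (1 : A) else 0 := by
      intro i hi
      have h := hrel (k : ℤ) (-(i : ℤ)) (by exact_mod_cast hk.ne') (by omega)
      rw [h]
      by_cases hik : i = k
      · subst hik
        rw [if_pos (by omega), if_pos rfl]
        congr 1
        norm_cast
      · rw [if_neg (by omega), if_neg hik]
    rw [Uop_eq_Xop, Uop_eq_Xop]
    exact mul_Xop (fun i : ℕ => B (-(i : ℤ))) (B (k : ℤ)) k hk (a (k : ℤ)) hcomm_neg hx pp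
  -- Newton recurrences
  have hDnewton : ∀ n : ℕ, (n : K) • Dop K B n
      = ∑ k ∈ Finset.Icc 1 n, B (k : ℤ) * Dop K B (n - k) := by
    intro n
    simp only [Dop_eq_Xop]
    exact newton_rec _ hcomm_pos n
  have hHnewton : ∀ n : ℕ, (n : K) * hval a n
      = ∑ k ∈ Finset.Icc 1 n, a (k : ℤ) * hval a (n - k) := by
    intro n
    have hc : ∀ i j : ℕ, 0 < i → 0 < j →
        Commute ((fun i : ℕ => a (i : ℤ)) i) ((fun i : ℕ => a (i : ℤ)) j) :=
      fun _ _ _ _ => Commute.all _ _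
    have h := newton_rec (K := K) (A := K) (fun i : ℕ => a (i : ℤ)) hc n
    rw [← hval_eq_Xop, smul_eq_mul] at h
    rw [h]
    refine Finset.sum_congr rfl fun k _ => ?_
    rw [← hval_eq_Xop]
  have hval_zero : hval a 0 = 1 := by rw [hval_eq_Xop, Xop_zero]
  have hD0 : Dop K B 0 = 1 := by rw [Dop_eq_Xop, Xop_zero]
  -- cancellation of nonzero scalars
  have hcancel : ∀ (c : K), c ≠ 0 → ∀ x y : A, c • x = c • y → x = y := by
    intro c hc x y hxy
    have h2 := congrArg (fun z => c⁻¹ • z) hxy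
    simpa [smul_smul, inv_mul_cancel₀ hc] using h2
  -- main claim by strong induction on q
  clear hp hq
  induction q using Nat.strong_induction_on generalizing p with
  | _ q IH =>
    rcases Nat.eq_zero_or_pos q with rfl | hq
    · simp [hD0, hval_zero]
    have hqK : (q : K) ≠ 0 := Nat.cast_ne_zero.mpr hq.ne'
    refine hcancel (q : K) hqK _ _ ?_
    -- expand the left-hand side
    have hL : (q : K) • (Dop K B q * Uop K B p)
        = (∑ k ∈ Finset.Icc 1 q, ∑ j ∈ Finset.range (min p (q - k) + 1),
            hval a j • (Uop K B (p - j) * (B (k : ℤ) * Dop K B (q - k - j))))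
          + ∑ k ∈ Finset.Icc 1 q, ∑ j ∈ Finset.range (min p (q - k) + 1),
            (if k + j ≤ p then
              (hval a j * a (k : ℤ)) • (Uop K B (p - (j + k)) * Dop K B (q - (j + k)))
             else 0) := by
      rw [← smul_mul_assoc, hDnewton q, Finset.sum_mul, ← Finset.sum_add_distrib]
      refine Finset.sum_congr rfl fun k hk => ?_
      obtain ⟨hk1, hkq⟩ := Finset.mem_Icc.mp hk
      rw [mul_assoc, IH (q - k) (by omega) p, Finset.mul_sum, ← Finset.sum_add_distrib]
      refine Finset.sum_congr rfl fun j hj => ?_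
      have hj' : j ≤ min p (q - k) := Nat.lt_succ_iff.mp (Finset.mem_range.mp hj)
      rw [mul_smul_comm, ← mul_assoc, hBU k (p - j) (by omega), add_mul, smul_add]
      congr 1
      · rw [mul_assoc]
      · by_cases hcond : k + j ≤ p
        · rw [if_pos (by omega), if_pos hcond, smul_mul_assoc, smul_smul]
          have e1 : p - j - k = p - (j + k) := by omega
          have e2 : q - k - j = q - (j + k) := by omega
          rw [e1, e2]
        · rw [if_neg (by omega), if_neg hcond, zero_mul, smul_zero]
    -- expand the right-hand side
    have hR : (q : K) • (∑ j ∈ Finset.range (min p q + 1),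
          hval a j • (Uop K B (p - j) * Dop K B (q - j)))
        = (∑ j ∈ Finset.range (min p q + 1), ∑ k ∈ Finset.Icc 1 (q - j),
            hval a j • (Uop K B (p - j) * (B (k : ℤ) * Dop K B (q - j - k))))
          + ∑ j ∈ Finset.range (min p q + 1), ∑ k ∈ Finset.Icc 1 j,
            (a (k : ℤ) * hval a (j - k)) • (Uop K B (p - j) * Dop K B (q - j)) := by
      rw [Finset.smul_sum, ← Finset.sum_add_distrib]
      refine Finset.sum_congr rfl fun j hj => ?_
      have hj' : j ≤ min p q := Nat.lt_succ_iff.mp (Finset.mem_range.mp hj)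
      have hsplit : (q : K) = ((q - j : ℕ) : K) + (j : K) := by
        push_cast [show j ≤ q by omega]
        ring
      rw [hsplit, add_smul]
      congr 1
      · rw [smul_comm, ← Finset.smul_sum]
        congr 1
        rw [← Finset.mul_sum, ← hDnewton (q - j), mul_smul_comm]
      · rw [smul_smul, hHnewton j, Finset.sum_smul]
    rw [hL, hR]
    congr 1
    -- first double sums agree (reindex (k, j) ↦ (j, k))
    · rw [Finset.sum_sigma' (Finset.Icc 1 q)
        (fun k => Finset.range (min p (q - k) + 1))
        (fun k j => hval a j • (Uop K B (p - j) * (B (k : ℤ) * Dop K B (q - k - j)))),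
        Finset.sum_sigma' (Finset.range (min p q + 1))
        (fun j => Finset.Icc 1 (q - j))
        (fun j k => hval a j • (Uop K B (p - j) * (B (k : ℤ) * Dop K B (q - j - k))))]
      refine Finset.sum_nbij' (i := fun x => ⟨x.2, x.1⟩) (j := fun x => ⟨x.2, x.1⟩)
        ?_ ?_ ?_ ?_ ?_
      · rintro ⟨k, j⟩ hx
        simp only [Finset.mem_sigma, Finset.mem_Icc, Finset.mem_range] at hx ⊢
        omega
      · rintro ⟨j, k⟩ hx
        simp only [Finset.mem_sigma, Finset.mem_Icc, Finset.mem_range] at hx ⊢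
        omega
      · rintro ⟨k, j⟩ _; rfl
      · rintro ⟨j, k⟩ _; rfl
      · rintro ⟨k, j⟩ _
        have e : q - k - j = q - j - k := by omega
        rw [e]
    -- second double sums agree (reindex (k, j) ↦ (j + k, k))
    · rw [Finset.sum_sigma' (Finset.Icc 1 q)
        (fun k => Finset.range (min p (q - k) + 1))
        (fun k j => if k + j ≤ p then
          (hval a j * a (k : ℤ)) • (Uop K B (p - (j + k)) * Dop K B (q - (j + k))) else 0),
        Finset.sum_sigma' (Finset.range (min p q + 1))
        (fun j => Finset.Icc 1 j)
        (fun j k => (a (k : ℤ) * hval a (j - k)) • (Uop K B (p - j) * Dop K B (q - j)))]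
      rw [← Finset.sum_filter (fun x : Σ _ : ℕ, ℕ => x.1 + x.2 ≤ p)]
      refine Finset.sum_nbij' (i := fun x => ⟨x.2 + x.1, x.1⟩) (j := fun x => ⟨x.2, x.1 - x.2⟩)
        ?_ ?_ ?_ ?_ ?_
      · rintro ⟨k, j⟩ hx
        simp only [Finset.mem_filter, Finset.mem_sigma, Finset.mem_Icc, Finset.mem_range]
          at hx ⊢
        omega
      · rintro ⟨j, k⟩ hx
        simp only [Finset.mem_filter, Finset.mem_sigma, Finset.mem_Icc, Finset.mem_range]
          at hx ⊢
        omega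
      · rintro ⟨k, j⟩ hx
        simp only [Finset.mem_filter, Finset.mem_sigma, Finset.mem_Icc, Finset.mem_range]
          at hx
        have e : j + k - k = j := by omega
        simp [e]
      · rintro ⟨j, k⟩ hx
        simp only [Finset.mem_filter, Finset.mem_sigma, Finset.mem_Icc, Finset.mem_range]
          at hx
        have e : j - k + k = j := by omega
        simp [e]
      · rintro ⟨k, j⟩ hx
        simp only [Finset.mem_filter, Finset.mem_sigma, Finset.mem_Icc, Finset.mem_range]
          at hx
        have e : j + k - k = j := by omega
        rw [e, mul_comm]
end

section
/- Let V be a representation of the Heisenberg algebra H[a] with a distinguished basis {v_s : s ∈ S}, and for a composition α = (α_1,...,α_l) set U_α = U_{α_l}···U_{α_1}. Then the generating function F_{s/t}(x_1,x_2,...) = Σ_α x^α ⟨U_α · v_t, v_s⟩ (sum over all compositions α, where ⟨·,·⟩ makes {v_s} orthonormal) is a symmetric function: its coefficients are invariant under permuting the parts of α, i.e. ⟨U_α · v_t, v_s⟩ depends only on the multiset of parts of α. -/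
/-- For a representation `V` of `H[a]` with distinguished basis `{v_s}`,
the coefficient `⟨U_{α_l}⋯U_{α_1}·v_t, v_s⟩` depends only on the multiset of parts of the
composition `α`; hence `F_{s/t} = ∑_α x^α ⟨U_α·v_t, v_s⟩` is a symmetric function. -/
theorem F_coeff_perm_invariant
    {K V S : Type*} [Field K] [CharZero K] [AddCommGroup V] [Module K V]
    (v : Module.Basis S K V)
    (a : ℤ → K) (ha : ∀ l : ℤ, l ≠ 0 → a l ≠ 0) (haskew : ∀ l : ℤ, a (-l) = a l)
    (ρ : ℤ → Module.End K V)
    (hrel : ∀ k l : ℤ, k ≠ 0 → l ≠ 0 →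
      ρ k * ρ l - ρ l * ρ k = if k = -l then ((k : K) * a k) • (1 : Module.End K V) else 0)
    (s t : S) (α β : List ℕ) (hα : ∀ i ∈ α, 0 < i) (hperm : α.Perm β) :
    v.repr (α.foldl (fun w k => Uop K ρ k w) (v t)) s =
    v.repr (β.foldl (fun w k => Uop K ρ k w) (v t)) s := by

  have hBcomm : ∀ i j : ℕ, 0 < i → 0 < j →
      Commute (ρ (-(i:ℤ))) (ρ (-(j:ℤ))) := by
    intro i j hi hj
    have h := hrel (-(i:ℤ)) (-(j:ℤ)) (by omega) (by omega)
    rw [if_neg (by omega)] at h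
    exact sub_eq_zero.mp h
  have hUB : ∀ k : ℕ, ∀ j : ℕ, 0 < j → Commute (Uop K ρ k) (ρ (-(j:ℤ))) := by
    intro k j hj
    unfold Uop
    apply Commute.sum_left
    intro lam _
    apply Commute.smul_left
    unfold BprodNeg
    apply Commute.list_prod_left
    intro x hx
    obtain ⟨i, hi, rfl⟩ := List.mem_map.mp hx
    have hi' : ∃ n ∈ lam.parts, i = (n : ℤ) := by simpa using hi
    obtain ⟨n, hn, rfl⟩ := hi'
    exact hBcomm n j (lam.parts_pos hn) hj
  have hUU : ∀ k l : ℕ, Commute (Uop K ρ k) (Uop K ρ l) := by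
    intro k l
    conv_rhs => rw [Uop]
    apply Commute.sum_right
    intro lam _
    apply Commute.smul_right
    unfold BprodNeg
    apply Commute.list_prod_right
    intro x hx
    obtain ⟨i, hi, rfl⟩ := List.mem_map.mp hx
    have hi' : ∃ n ∈ lam.parts, i = (n : ℤ) := by simpa using hi
    obtain ⟨n, hn, rfl⟩ := hi'
    exact hUB k n (lam.parts_pos hn)
  have key : ∀ {α β : List ℕ}, α.Perm β → ∀ w : V,
      α.foldl (fun w k => Uop K ρ k w) w = β.foldl (fun w k => Uop K ρ k w) w := by
    intro α β h
    induction h with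
    | nil => intro w; rfl
    | cons x h ih => intro w; simpa using ih _
    | swap x y l =>
        intro w
        simp only [List.foldl_cons]
        have h2 : Uop K ρ y (Uop K ρ x w) = Uop K ρ x (Uop K ρ y w) := by
          have h3 := LinearMap.congr_fun (hUU y x).eq w
          simpa only [Module.End.mul_apply] using h3
        rw [h2]
    | trans h1 h2 ih1 ih2 => intro w; rw [ih1, ih2]
  rw [key hperm]
end
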